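/- Let a finite collection of simplified columns over a symbol set S satisfy: (i) each symbol appears at most once as the top element across all columns, and (ii) there do not exist two columns of the forms (α, β) and (γ, α) with β ≠ α and γ ≠ α. Then the system of linear equations { top(c) + bottom(c) : c a two-element column } ∪ { top(c) : c a singleton column } over a finite field F (with symbols as variables) determines all top symbols uniquely; equivalently, the equations are solvable for every symbol appearing as a top element. -/
import Mathlib


/-- Back-substitution solvability (Section III-F): given a finite collection of
simplified columns, each a pair `(top, some bottom)` with distinct entries or a
singleton `(top, none)`, such that (i) each symbol appears at most once as a
top element, (ii) there are no two columns `(α, β)`, `(γ, α)` with `β ≠ α`,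
`γ ≠ α`, and (iii) every bottom symbol also appears as a top symbol, the
observed values `x(top) + x(bottom)` (resp. `x(top)`) determine `x` on every
top symbol: any two assignments producing the same observations agree on all
top symbols. -/
theorem back_substitution_solvable (V F : Type*) [Field F]
    (cols : Finset (V × Option V))
    (hdist : ∀ c ∈ cols, ∀ b : V, c.2 = some b → b ≠ c.1)
    (htop : ∀ c ∈ cols, ∀ c' ∈ cols, c.1 = c'.1 → c = c')
    (hpair : ∀ c ∈ cols, ∀ c' ∈ cols, ∀ α β γ : V,
      c = (α, some β) → c' = (γ, some α) → β = α ∨ γ = α)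
    (hbot : ∀ c ∈ cols, ∀ b : V, c.2 = some b → ∃ c' ∈ cols, c'.1 = b) :
    ∀ x y : V → F,
      (∀ c ∈ cols, x c.1 + c.2.elim 0 x = y c.1 + c.2.elim 0 y) →
      ∀ c ∈ cols, x c.1 = y c.1 := by
  intro x y h c hc
  match hc2 : c.2 with
  | none =>
      have := h c hc
      rw [hc2] at this
      simpa using this
  | some b =>
      have hb : b ≠ c.1 := hdist c hc b hc2
      obtain ⟨c', hc', hc'1⟩ := hbot c hc b hc2
      have hxb : x b = y b := by
        match hc'2 : c'.2 with
        | none =>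
            have := h c' hc'
            rw [hc'2, hc'1] at this
            simpa using this
        | some g =>
            have hg : g ≠ c'.1 := hdist c' hc' g hc'2
            have := hpair c' hc' c hc b g c.1
              (by rw [← hc'1, ← hc'2]) (by rw [← hc2])
            rcases this with h1 | h1
            · exact absurd h1 (by rw [hc'1] at hg; exact hg)
            · exact absurd h1.symm hb
      have := h c hc
      rw [hc2] at this
      simp only [Option.elim] at this
      rw [hxb] at this
      exact add_right_cancel this
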